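/- Let X be a random variable taking values in the closed unit disk with law μ, and suppose there exist constants ε, M₁, M₂ ∈ (0, ∞) such that for all z ∈ 𝔻 and all 0 < r ≤ 2 one has M₁·r^ε ≤ μ(B(z, r)) ≤ M₂·r^ε. Fix p > 0 and define F_p(z) := E[|log|z − X||^p] for z ∈ 𝔻. Then there exist constants C₁, C₂ > 0 depending only on p, ε, M₁, M₂ such that C₁ ≤ F_p(z) ≤ C₂ for all z ∈ 𝔻. -/

import Mathlib

/-!
For `k : ℕ`, the points `w` with `2⁻⁽ᵏ⁺¹⁾ < |z - w| ≤ 2⁻ᵏ` (for `k = 0` also those with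
`1 ≤ |z - w| < 2`) lie in the ball `B(z, 2¹⁻ᵏ)`, of mass at most `M₂ 2^{(1-k)ε}`, and satisfy
`|log |z - w|| ≤ (k + 1) log 2`. Since `(k + 1)^p 2^{-kε}` is summable, this bounds `F_p` from
above. From below, `|log |z - w|| ≥ log 2` on `B(z, 1/2)` minus the point `z`, which is `μ`-null
by the upper ball bound, and that ball has mass at least `M₁ 2^{-ε}`.
-/

open MeasureTheory Metric Real Filter Topology Set

theorem Real.summable_nat_add_one_rpow_mul_pow (p : ℝ) {r : ℝ} (hr₀ : 0 < r) (hr₁ : r < 1) :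
    Summable fun k : ℕ => ((k : ℝ) + 1) ^ p * r ^ k := by
  set n := ⌈p⌉₊
  have hnat : Summable fun k : ℕ => ((k : ℝ) + 1) ^ n * r ^ k := by
    have hr : ‖r‖ < 1 := by rwa [Real.norm_of_nonneg hr₀.le]
    have h : Summable fun k : ℕ => ((k + 1 : ℕ) : ℝ) ^ n * r ^ (k + 1) :=
      (summable_nat_add_iff (f := fun k : ℕ => (k : ℝ) ^ n * r ^ k) 1).2
        (summable_pow_mul_geometric_of_norm_lt_one n hr)
    refine (h.mul_left r⁻¹).congr fun k => ?_
    push_cast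
    field_simp
    ring
  refine hnat.of_nonneg_of_le (fun k => by positivity) fun k => ?_
  gcongr
  rw [← rpow_natCast]
  exact rpow_le_rpow_of_exponent_le (by linarith [k.cast_nonneg (α := ℝ)]) (Nat.le_ceil p)

noncomputable def logMomentBound (p ε M : ℝ) : ℝ :=
  ∑' k : ℕ, ((k + 1) * log 2) ^ p * (M * (2 / 2 ^ k) ^ ε)

lemma summable_logMomentBound (p : ℝ) {ε : ℝ} (hε : 0 < ε) (M : ℝ) :
    Summable fun k : ℕ => ((k + 1) * log 2) ^ p * (M * (2 / 2 ^ k : ℝ) ^ ε) := by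
  have hq₀ : 0 < (2 : ℝ)⁻¹ ^ ε := by positivity
  have hq₁ : (2 : ℝ)⁻¹ ^ ε < 1 := rpow_lt_one (by norm_num) (by norm_num) hε
  refine ((Real.summable_nat_add_one_rpow_mul_pow p hq₀ hq₁).mul_left
    (log 2 ^ p * M * 2 ^ ε)).congr fun k => ?_
  rw [mul_rpow (by positivity) (by positivity), div_eq_mul_inv, ← inv_pow,
    mul_rpow (by positivity) (by positivity), ← rpow_pow_comm (by norm_num)]
  ring

lemma logMomentBound_pos (p : ℝ) {ε M : ℝ} (hε : 0 < ε) (hM : 0 < M) :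
    0 < logMomentBound p ε M :=
  (summable_logMomentBound p hε M).tsum_pos (fun k => by positivity) 0 (by positivity)

lemma exists_lt_two_div_pow_and_abs_log_le {t : ℝ} (ht₀ : 0 ≤ t) (ht₂ : t < 2) :
    ∃ k : ℕ, t < 2 / 2 ^ k ∧ |log t| ≤ (k + 1) * log 2 := by
  rcases ht₀.eq_or_lt with rfl | ht₀
  · exact ⟨0, by norm_num, by simp [(log_pos one_lt_two).le]⟩
  rcases le_or_gt t 1 with ht₁ | ht₁
  · obtain ⟨k, hk, hk'⟩ := exists_nat_pow_near (one_le_one_div ht₀ ht₁) one_lt_two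
    refine ⟨k, ?_, ?_⟩
    · calc t ≤ 1 / 2 ^ k := (le_one_div (by positivity) ht₀).1 hk
        _ < 2 / 2 ^ k := by gcongr; norm_num
    · rw [abs_of_nonpos (log_nonpos ht₀.le ht₁), ← log_inv, ← one_div, ← Nat.cast_succ,
        ← log_pow]
      exact log_le_log (by positivity) hk'.le
  · refine ⟨0, by simpa using ht₂, ?_⟩
    rw [abs_of_pos (log_pos ht₁)]
    simpa using (log_lt_log ht₀ ht₂).le

section MetricSpace

variable {α : Type*} [MetricSpace α] {x : α} {p ε M : ℝ}

lemma ofReal_abs_log_dist_rpow_le_tsum_indicator (hp : 0 ≤ p) {w : α} (hw : dist x w < 2) :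
    ENNReal.ofReal (|log (dist x w)| ^ p) ≤
      ∑' k : ℕ, (ball x (2 / 2 ^ k)).indicator
        (fun _ => ENNReal.ofReal (((k + 1) * log 2) ^ p)) w := by
  obtain ⟨k, hk, hlog⟩ := exists_lt_two_div_pow_and_abs_log_le dist_nonneg hw
  calc ENNReal.ofReal (|log (dist x w)| ^ p) ≤ ENNReal.ofReal (((k + 1) * log 2) ^ p) := by
        gcongr
    _ = (ball x (2 / 2 ^ k)).indicator (fun _ => ENNReal.ofReal (((k + 1) * log 2) ^ p)) w := by
        rw [indicator_of_mem (by rwa [mem_ball, dist_comm])]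
    _ ≤ _ := ENNReal.le_tsum (f := fun k : ℕ => (ball x (2 / 2 ^ k)).indicator
          (fun _ => ENNReal.ofReal (((k + 1) * log 2) ^ p)) w) k

variable [MeasurableSpace α] {μ : Measure α} [IsFiniteMeasure μ]

lemma measure_singleton_eq_zero_of_measureReal_ball_le {R : ℝ} (hε : 0 < ε) (hR : 0 < R)
    (hball : ∀ r, 0 < r → r ≤ R → μ.real (ball x r) ≤ M * r ^ ε) : μ {x} = 0 := by
  have hlim : Tendsto (fun r : ℝ => M * r ^ ε) (𝓝[>] 0) (𝓝 0) := by
    have := (continuousAt_rpow_const 0 ε (Or.inr hε.le)).tendsto.const_mul M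
    simpa [zero_rpow hε.ne'] using this.mono_left nhdsWithin_le_nhds
  have hsmall : ∀ᶠ r in 𝓝[>] (0 : ℝ), μ.real {x} ≤ M * r ^ ε := by
    filter_upwards [Ioc_mem_nhdsGT hR] with r hr
    exact (measureReal_mono (singleton_subset_iff.2 (mem_ball_self hr.1))).trans
      (hball r hr.1 hr.2)
  exact (measureReal_eq_zero_iff (measure_ne_top μ _)).1
    ((ge_of_tendsto hlim hsmall).antisymm measureReal_nonneg)

lemma rpow_log_two_mul_measureReal_ball_le_integral (hp : 0 ≤ p) (hx : μ {x} = 0)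
    (hint : Integrable (fun w => |log (dist x w)| ^ p) μ) :
    log 2 ^ p * μ.real (ball x 2⁻¹) ≤ ∫ w, |log (dist x w)| ^ p ∂μ := by
  have hsub : ball x 2⁻¹ \ {x} ⊆ {w | log 2 ^ p ≤ |log (dist x w)| ^ p} := by
    rintro w ⟨hw, hwx⟩
    have hd : 0 < dist x w := dist_pos.2 (Ne.symm hwx)
    have hd' : dist x w < 2⁻¹ := by rwa [mem_ball, dist_comm] at hw
    have hlog : log 2 ≤ |log (dist x w)| := by
      rw [abs_of_neg (log_neg hd (hd'.trans (by norm_num))), ← log_inv]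
      exact log_le_log two_pos ((lt_inv_comm₀ hd two_pos).1 hd').le
    exact rpow_le_rpow (by positivity) hlog hp
  calc log 2 ^ p * μ.real (ball x 2⁻¹) = log 2 ^ p * μ.real (ball x 2⁻¹ \ {x}) := by
        rw [measureReal_sdiff_null (by simp [measureReal_def, hx])]
    _ ≤ log 2 ^ p * μ.real {w | log 2 ^ p ≤ |log (dist x w)| ^ p} :=
        mul_le_mul_of_nonneg_left (measureReal_mono hsub) (by positivity)
    _ ≤ ∫ w, |log (dist x w)| ^ p ∂μ :=
        mul_meas_ge_le_integral_of_nonneg (ae_of_all _ fun w => by positivity) hint _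

variable [OpensMeasurableSpace α]

lemma measurable_abs_log_dist_rpow (x : α) (p : ℝ) :
    Measurable fun w => |log (dist x w)| ^ p :=
  (measurable_log.comp (continuous_const.dist continuous_id).measurable).abs.pow_const p

lemma lintegral_abs_log_dist_rpow_le (hp : 0 ≤ p) (hε : 0 < ε) (hM : 0 ≤ M)
    (hball : ∀ r, 0 < r → r ≤ 2 → μ.real (ball x r) ≤ M * r ^ ε)
    (hae : ∀ᵐ w ∂μ, dist x w < 2) :
    ∫⁻ w, ENNReal.ofReal (|log (dist x w)| ^ p) ∂μ ≤ ENNReal.ofReal (logMomentBound p ε M) := by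
  calc ∫⁻ w, ENNReal.ofReal (|log (dist x w)| ^ p) ∂μ
      ≤ ∫⁻ w, ∑' k : ℕ, (ball x (2 / 2 ^ k)).indicator
          (fun _ => ENNReal.ofReal (((k + 1) * log 2) ^ p)) w ∂μ :=
        lintegral_mono_ae <| hae.mono fun w hw => ofReal_abs_log_dist_rpow_le_tsum_indicator hp hw
    _ = ∑' k : ℕ, ENNReal.ofReal (((k + 1) * log 2) ^ p) * μ (ball x (2 / 2 ^ k)) := by
        rw [lintegral_tsum fun k => aemeasurable_const.indicator measurableSet_ball]
        simp only [lintegral_indicator_const measurableSet_ball]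
    _ ≤ ∑' k : ℕ, ENNReal.ofReal (((k + 1) * log 2) ^ p * (M * (2 / 2 ^ k) ^ ε)) := by
        gcongr with k
        rw [ENNReal.ofReal_mul (by positivity), ← ofReal_measureReal]
        gcongr
        exact hball _ (by positivity) (div_le_self zero_le_two (one_le_pow₀ one_le_two))
    _ = ENNReal.ofReal (logMomentBound p ε M) :=
        (ENNReal.ofReal_tsum_of_nonneg (fun k => by positivity)
          (summable_logMomentBound p hε M)).symm

lemma integrable_abs_log_dist_rpow (hp : 0 ≤ p) (hε : 0 < ε) (hM : 0 ≤ M)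
    (hball : ∀ r, 0 < r → r ≤ 2 → μ.real (ball x r) ≤ M * r ^ ε)
    (hae : ∀ᵐ w ∂μ, dist x w < 2) :
    Integrable (fun w => |log (dist x w)| ^ p) μ := by
  refine ⟨(measurable_abs_log_dist_rpow x p).aestronglyMeasurable, ?_⟩
  rw [hasFiniteIntegral_iff_ofReal (ae_of_all _ fun w => by positivity)]
  exact (lintegral_abs_log_dist_rpow_le hp hε hM hball hae).trans_lt ENNReal.ofReal_lt_top

lemma integral_abs_log_dist_rpow_le (hp : 0 ≤ p) (hε : 0 < ε) (hM : 0 ≤ M)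
    (hball : ∀ r, 0 < r → r ≤ 2 → μ.real (ball x r) ≤ M * r ^ ε)
    (hae : ∀ᵐ w ∂μ, dist x w < 2) :
    ∫ w, |log (dist x w)| ^ p ∂μ ≤ logMomentBound p ε M := by
  rw [integral_eq_lintegral_of_nonneg_ae (ae_of_all _ fun w => by positivity)
    (measurable_abs_log_dist_rpow x p).aestronglyMeasurable]
  exact ENNReal.toReal_le_of_le_ofReal (tsum_nonneg fun k => by positivity)
    (lintegral_abs_log_dist_rpow_le hp hε hM hball hae)

end MetricSpace

theorem log_moment_bounds
    (μ : Measure ℂ) [IsProbabilityMeasure μ] (hsupp : μ (Metric.closedBall (0 : ℂ) 1) = 1)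
    (ε M₁ M₂ : ℝ) (hε : 0 < ε) (hM₁ : 0 < M₁) (hM₂ : 0 < M₂)
    (hball : ∀ z ∈ Metric.ball (0 : ℂ) 1, ∀ r : ℝ, 0 < r → r ≤ 2 →
      M₁ * r ^ ε ≤ (μ (Metric.ball z r)).toReal ∧ (μ (Metric.ball z r)).toReal ≤ M₂ * r ^ ε)
    (p : ℝ) (hp : 0 < p) :
    ∃ C₁ C₂ : ℝ, 0 < C₁ ∧ 0 < C₂ ∧ ∀ z ∈ Metric.ball (0 : ℂ) 1,
      C₁ ≤ ∫ w, |Real.log (‖z - w‖)| ^ p ∂μ ∧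
      ∫ w, |Real.log (‖z - w‖)| ^ p ∂μ ≤ C₂ := by
  have hdisk : ∀ᵐ w ∂μ, w ∈ closedBall (0 : ℂ) 1 := by
    rw [ae_mem_iff_measure_eq measurableSet_closedBall.nullMeasurableSet, hsupp, measure_univ]
  refine ⟨log 2 ^ p * (M₁ * 2⁻¹ ^ ε), logMomentBound p ε M₂, by positivity,
    logMomentBound_pos p hε hM₂, fun z hz => ?_⟩
  have hupper (r : ℝ) (hr₀ : 0 < r) (hr₂ : r ≤ 2) : μ.real (ball z r) ≤ M₂ * r ^ ε :=
    (hball z hz r hr₀ hr₂).2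
  have hnear : ∀ᵐ w ∂μ, dist z w < 2 := hdisk.mono fun w hw => by
    calc dist z w ≤ dist z 0 + dist w 0 := dist_triangle_right z w 0
      _ < 1 + 1 := add_lt_add_of_lt_of_le (mem_ball.1 hz) (mem_closedBall.1 hw)
      _ = 2 := one_add_one_eq_two
  simp only [← dist_eq_norm]
  refine ⟨?_, integral_abs_log_dist_rpow_le hp.le hε hM₂.le hupper hnear⟩
  calc log 2 ^ p * (M₁ * 2⁻¹ ^ ε) ≤ log 2 ^ p * μ.real (ball z 2⁻¹) := by
        gcongr
        exact (hball z hz _ (by norm_num) (by norm_num)).1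
    _ ≤ _ := rpow_log_two_mul_measureReal_ball_le_integral hp.le
        (measure_singleton_eq_zero_of_measureReal_ball_le hε two_pos hupper)
        (integrable_abs_log_dist_rpow hp.le hε hM₂.le hupper hnear)
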